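/- arXiv:1902.09061 — 4 statements merged into one kernel-verified Lean document; each statement's English description precedes it below -/
import Mathlib

section
/- Strengthened Cauchy–Bunyakowski–Schwarz inequality: Given a real Hilbert space V and two finite-dimensional subspaces V₁, V₂ ⊂ V with V₁ ∩ V₂ = {0}, there exists a constant 0 ≤ α < 1 such that |(v₁, v₂)| ≤ α ‖v₁‖ ‖v₂‖ for all v₁ ∈ V₁ and v₂ ∈ V₂. -/
/-!
Let `P` be the orthogonal projection onto `V₂`. For `v₂ ∈ V₂` we have `⟪v₁, v₂⟫ = ⟪P v₁, v₂⟫`, so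
`α = ‖P|_{V₁}‖` works. Since `V₁ ∩ V₂ = 0`, `‖P v‖ < ‖v‖` for every nonzero `v ∈ V₁`, and as the
unit sphere of `V₁` is compact, the operator norm is attained on it, hence `α < 1`.
-/

open RealInnerProductSpace

namespace ContinuousLinearMap

variable {𝕜 E F : Type*} [RCLike 𝕜] [NormedAddCommGroup E] [NormedSpace 𝕜 E] [ProperSpace E]
  [SeminormedAddCommGroup F] [NormedSpace 𝕜 F]

theorem exists_mem_sphere_norm_apply_eq_opNorm [Nontrivial E] (f : E →L[𝕜] F) :
    ∃ x ∈ Metric.sphere (0 : E) 1, ‖f x‖ = ‖f‖ := by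
  have hS := (isCompact_sphere (0 : E) 1).image (continuous_norm.comp f.continuous)
  have hne := Set.nonempty_coe_sort.mp (NormedSpace.sphere_nonempty_rclike 𝕜 (E := E) zero_le_one)
  simpa [f.sSup_sphere_eq_norm] using hS.sSup_mem (hne.image _)

theorem opNorm_lt_one_of_norm_apply_lt (f : E →L[𝕜] F) (hf : ∀ x ≠ 0, ‖f x‖ < ‖x‖) :
    ‖f‖ < 1 := by
  cases subsingleton_or_nontrivial E
  · simp [Subsingleton.elim f 0]
  obtain ⟨x, hx, hfx⟩ := f.exists_mem_sphere_norm_apply_eq_opNorm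
  rw [mem_sphere_zero_iff_norm] at hx
  rw [← hfx, ← hx]
  exact hf x (norm_ne_zero_iff.mp (by simp [hx]))

end ContinuousLinearMap

namespace Submodule

variable {𝕜 E : Type*} [RCLike 𝕜] [NormedAddCommGroup E] [InnerProductSpace 𝕜 E]

section Projection

variable (K : Submodule 𝕜 E) [K.HasOrthogonalProjection]

theorem norm_starProjection_lt_of_notMem {v : E} (hv : v ∉ K) :
    ‖K.starProjection v‖ < ‖v‖ :=
  (K.norm_starProjection_apply_le v).lt_of_ne fun h => hv ((K.mem_iff_norm_starProjection v).mpr h)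

theorem inner_starProjection_left_of_mem {v w : E} (hw : w ∈ K) :
    inner 𝕜 (K.starProjection v) w = inner 𝕜 v w := by
  rw [inner_starProjection_left_eq_right, starProjection_eq_self_iff.mpr hw]

end Projection

/-- The cosine of the minimal angle between `V₁` and `V₂`, i.e. the supremum of `‖⟪v₁, v₂⟫‖` over
unit vectors `v₁ ∈ V₁`, `v₂ ∈ V₂`. -/
noncomputable def cosAngle (V₁ V₂ : Submodule 𝕜 E) [V₂.HasOrthogonalProjection] : ℝ :=
  ‖V₂.starProjection ∘L V₁.subtypeL‖

variable (V₁ V₂ : Submodule 𝕜 E) [V₂.HasOrthogonalProjection]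

theorem norm_inner_le_cosAngle_mul {v₁ v₂ : E} (hv₁ : v₁ ∈ V₁) (hv₂ : v₂ ∈ V₂) :
    ‖inner 𝕜 v₁ v₂‖ ≤ cosAngle V₁ V₂ * ‖v₁‖ * ‖v₂‖ := by
  have hproj : ‖V₂.starProjection v₁‖ ≤ cosAngle V₁ V₂ * ‖v₁‖ :=
    (V₂.starProjection ∘L V₁.subtypeL).le_opNorm ⟨v₁, hv₁⟩
  calc ‖inner 𝕜 v₁ v₂‖ = ‖inner 𝕜 (V₂.starProjection v₁) v₂‖ := by
        rw [V₂.inner_starProjection_left_of_mem hv₂]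
    _ ≤ ‖V₂.starProjection v₁‖ * ‖v₂‖ := norm_inner_le_norm _ _
    _ ≤ cosAngle V₁ V₂ * ‖v₁‖ * ‖v₂‖ := by gcongr

theorem cosAngle_lt_one [ProperSpace V₁] (h : V₁ ⊓ V₂ = ⊥) : cosAngle V₁ V₂ < 1 := by
  refine ContinuousLinearMap.opNorm_lt_one_of_norm_apply_lt _ fun v hv => ?_
  refine V₂.norm_starProjection_lt_of_notMem fun hv₂ => hv ?_
  simpa [h] using mem_inf.mpr ⟨v.2, hv₂⟩

end Submodule

theorem strengthened_CBS_general {V : Type*} [NormedAddCommGroup V] [InnerProductSpace ℝ V]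
    (V₁ V₂ : Submodule ℝ V)
    [FiniteDimensional ℝ V₁] [FiniteDimensional ℝ V₂]
    (h : V₁ ⊓ V₂ = ⊥) :
    ∃ α : ℝ, 0 ≤ α ∧ α < 1 ∧
      ∀ v₁ ∈ V₁, ∀ v₂ ∈ V₂, |⟪v₁, v₂⟫| ≤ α * ‖v₁‖ * ‖v₂‖ :=
  ⟨V₁.cosAngle V₂, norm_nonneg (V₂.starProjection ∘L V₁.subtypeL), V₁.cosAngle_lt_one V₂ h,
    fun _ hv₁ _ hv₂ =>
      (Real.norm_eq_abs _).symm.trans_le (V₁.norm_inner_le_cosAngle_mul V₂ hv₁ hv₂)⟩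

/-- Strengthened Cauchy–Bunyakowski–Schwarz inequality: for finite-dimensional
subspaces `V₁, V₂` of a real Hilbert space with trivial intersection, there is
`0 ≤ α < 1` with `|(v₁, v₂)| ≤ α ‖v₁‖ ‖v₂‖` for all `v₁ ∈ V₁`, `v₂ ∈ V₂`. -/
theorem strengthened_CBS {V : Type*} [NormedAddCommGroup V] [InnerProductSpace ℝ V]
    [CompleteSpace V] (V₁ V₂ : Submodule ℝ V)
    [FiniteDimensional ℝ V₁] [FiniteDimensional ℝ V₂]
    (h : V₁ ⊓ V₂ = ⊥) :
    ∃ α : ℝ, 0 ≤ α ∧ α < 1 ∧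
      ∀ v₁ ∈ V₁, ∀ v₂ ∈ V₂, |⟪v₁, v₂⟫| ≤ α * ‖v₁‖ * ‖v₂‖ :=
  strengthened_CBS_general V₁ V₂ h
end

section
/- POD basis optimality: With the setup of the correlation operator C on snapshots {u_n}, the span of the first R eigenvectors of C minimizes the total squared projection error: for any R-dimensional subspace W ⊂ H with orthogonal projection P_W, Σ_{n=0}^N ‖u_n − P_W u_n‖² ≥ Σ_{n=0}^N ‖u_n − Σ_{i=1}^R (u_n, φ_i)φ_i‖². -/
open RealInnerProductSpace

section PodAux

variable {H : Type*} [NormedAddCommGroup H] [InnerProductSpace ℝ H]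

/-- Norm-squared of an orthonormal expansion. -/
lemma pod_norm_sum {ι : Type*} [Fintype ι] {v : ι → H} (hv : Orthonormal ℝ v)
    (c : ι → ℝ) (s : Finset ι) :
    ‖∑ i ∈ s, c i • v i‖ ^ 2 = ∑ i ∈ s, (c i) ^ 2 := by
  rw [← real_inner_self_eq_norm_sq, sum_inner]
  refine Finset.sum_congr rfl fun i hi => ?_
  rw [real_inner_smul_left, hv.inner_right_sum c hi, sq]

/-- Expansion of an element of the span of an orthonormal family. -/
lemma pod_expand {K : ℕ} {φ : Fin K → H} (horth : Orthonormal ℝ φ) {x : H}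
    (hx : x ∈ Submodule.span ℝ (Set.range φ)) :
    x = ∑ i, ⟪x, φ i⟫ • φ i := by
  obtain ⟨c, rfl⟩ := (Submodule.mem_span_range_iff_exists_fun ℝ).mp hx
  refine (Finset.sum_congr rfl fun i _ => ?_).symm
  congr 1
  rw [real_inner_comm, horth.inner_right_fintype]

/-- The majorization step. -/
lemma pod_major {K R : ℕ} (lam b : Fin K → ℝ) (t : ℝ)
    (h1 : ∀ i : Fin K, (i : ℕ) < R → t ≤ lam i)
    (h2 : ∀ i : Fin K, ¬(i : ℕ) < R → lam i ≤ t)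
    (ht0 : 0 ≤ t)
    (hb0 : ∀ i, 0 ≤ b i) (hb1 : ∀ i, b i ≤ 1)
    (htsum : t * (∑ i, b i) ≤
      t * ((Finset.univ.filter fun i : Fin K => (i : ℕ) < R).card : ℝ)) :
    ∑ i, lam i * b i ≤
      ∑ i ∈ Finset.univ.filter (fun i : Fin K => (i : ℕ) < R), lam i := by
  classical
  have hper : ∀ i : Fin K, lam i * b i ≤
      (if (i : ℕ) < R then lam i else 0) + t * (b i - if (i : ℕ) < R then 1 else 0) := by
    intro i
    by_cases hi : (i : ℕ) < R <;> simp only [hi, if_true, if_false]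
    · nlinarith [h1 i hi, hb1 i, hb0 i]
    · nlinarith [h2 i hi, hb0 i]
  calc ∑ i, lam i * b i
      ≤ ∑ i : Fin K, ((if (i : ℕ) < R then lam i else 0)
          + t * (b i - if (i : ℕ) < R then 1 else 0)) :=
        Finset.sum_le_sum fun i _ => hper i
    _ = (∑ i ∈ Finset.univ.filter (fun i : Fin K => (i : ℕ) < R), lam i)
          + (t * (∑ i, b i)
            - t * ((Finset.univ.filter fun i : Fin K => (i : ℕ) < R).card : ℝ)) := by
        rw [Finset.sum_add_distrib, ← Finset.sum_filter]
        congr 1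
        have : ∑ i : Fin K, t * (b i - if (i : ℕ) < R then 1 else 0)
            = t * ((∑ i, b i) - ∑ i : Fin K, (if (i : ℕ) < R then (1:ℝ) else 0)) := by
          rw [← Finset.mul_sum, Finset.sum_sub_distrib]
        rw [this, Finset.sum_boole]
        ring
    _ ≤ ∑ i ∈ Finset.univ.filter (fun i : Fin K => (i : ℕ) < R), lam i := by
        linarith [htsum]

end PodAux

/-- POD basis optimality: the span of the first `R` eigenvectors of the
correlation operator `C v = Σ_n (u_n, v) u_n` minimizes the total squared
projection error among all `R`-dimensional subspaces `W`. -/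
theorem pod_optimality {H : Type*} [NormedAddCommGroup H] [InnerProductSpace ℝ H]
    {N K : ℕ} (u : Fin (N + 1) → H) (φ : Fin K → H) (lam : Fin K → ℝ)
    (horth : Orthonormal ℝ φ)
    (heig : ∀ i, (∑ n, ⟪u n, φ i⟫ • u n) = lam i • φ i)
    (hdecr : ∀ i j : Fin K, i ≤ j → lam j ≤ lam i)
    (hspan : ∀ n, u n ∈ Submodule.span ℝ (Set.range φ))
    (R : ℕ)
    (W : Submodule ℝ H) [FiniteDimensional ℝ W] [CompleteSpace W]
    (hW : Module.finrank ℝ W = R) :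
    ∑ n, ‖u n - (W.orthogonalProjectionOnto (u n) : H)‖ ^ 2
      ≥ ∑ n, ‖u n - ∑ i ∈ Finset.univ.filter (fun i : Fin K => (i : ℕ) < R),
          ⟪u n, φ i⟫ • φ i‖ ^ 2 := by
  classical
  set F : Finset (Fin K) := Finset.univ.filter (fun i : Fin K => (i : ℕ) < R) with hF
  -- Gram relations
  have gram : ∀ i j : Fin K, (∑ n, ⟪u n, φ i⟫ * ⟪u n, φ j⟫)
      = if i = j then lam i else 0 := by
    intro i j
    have h := congrArg (fun v : H => ⟪v, φ j⟫) (heig i)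
    simp only [sum_inner, real_inner_smul_left] at h
    rw [h, orthonormal_iff_ite.mp horth i j]
    simp [mul_ite]
  have hlam0 : ∀ i, 0 ≤ lam i := by
    intro i
    have h := gram i i
    rw [if_pos rfl] at h
    rw [← h]
    exact Finset.sum_nonneg fun n _ => mul_self_nonneg _
  -- quadratic form identity
  have hquad : ∀ w : H, ∑ n, ⟪u n, w⟫ ^ 2 = ∑ i, lam i * ⟪φ i, w⟫ ^ 2 := by
    intro w
    have hu : ∀ n, ⟪u n, w⟫ = ∑ i, ⟪u n, φ i⟫ * ⟪φ i, w⟫ := by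
      intro n
      conv_lhs => rw [pod_expand horth (hspan n)]
      rw [sum_inner]
      exact Finset.sum_congr rfl fun i _ => real_inner_smul_left _ _ _
    calc ∑ n, ⟪u n, w⟫ ^ 2
        = ∑ n, ∑ i, ⟪φ i, w⟫ * (⟪u n, φ i⟫ * ⟪u n, w⟫) := by
          refine Finset.sum_congr rfl fun n _ => ?_
          calc ⟪u n, w⟫ ^ 2 = (∑ i, ⟪u n, φ i⟫ * ⟪φ i, w⟫) * ⟪u n, w⟫ := by
                rw [← hu n, sq]
            _ = _ := by
                rw [Finset.sum_mul]
                exact Finset.sum_congr rfl fun i _ => by ring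
      _ = ∑ i, ⟪φ i, w⟫ * ∑ n, ⟪u n, φ i⟫ * ⟪u n, w⟫ := by
          rw [Finset.sum_comm]
          exact Finset.sum_congr rfl fun i _ => by rw [Finset.mul_sum]
      _ = ∑ i, lam i * ⟪φ i, w⟫ ^ 2 := by
          refine Finset.sum_congr rfl fun i _ => ?_
          have h : ∑ n, ⟪u n, φ i⟫ * ⟪u n, w⟫ = lam i * ⟪φ i, w⟫ := by
            have h := congrArg (fun v : H => ⟪v, w⟫) (heig i)
            simpa only [sum_inner, real_inner_smul_left] using h
          rw [h]; ring
  -- Parseval for the snapshots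
  have hpars : ∀ n, ‖u n‖ ^ 2 = ∑ i, ⟪u n, φ i⟫ ^ 2 := by
    intro n
    conv_lhs => rw [pod_expand horth (hspan n)]
    exact pod_norm_sum horth _ _
  -- the right-hand side equals Σ_{i ∉ F} lam i
  have hrhs : ∑ n, ‖u n - ∑ i ∈ F, ⟪u n, φ i⟫ • φ i‖ ^ 2
      = ∑ i ∈ Fᶜ, lam i := by
    have hterm : ∀ n, ‖u n - ∑ i ∈ F, ⟪u n, φ i⟫ • φ i‖ ^ 2
        = ∑ i ∈ Fᶜ, ⟪u n, φ i⟫ ^ 2 := by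
      intro n
      have hsplit : u n - ∑ i ∈ F, ⟪u n, φ i⟫ • φ i = ∑ i ∈ Fᶜ, ⟪u n, φ i⟫ • φ i :=
        calc u n - ∑ i ∈ F, ⟪u n, φ i⟫ • φ i
            = ((∑ i ∈ F, ⟪u n, φ i⟫ • φ i) + ∑ i ∈ Fᶜ, ⟪u n, φ i⟫ • φ i)
              - ∑ i ∈ F, ⟪u n, φ i⟫ • φ i := by
              rw [Finset.sum_add_sum_compl, ← pod_expand horth (hspan n)]
          _ = ∑ i ∈ Fᶜ, ⟪u n, φ i⟫ • φ i := add_sub_cancel_left _ _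
      rw [hsplit, pod_norm_sum horth]
    rw [Finset.sum_congr rfl fun n _ => hterm n, Finset.sum_comm]
    refine Finset.sum_congr rfl fun i _ => ?_
    have h := gram i i
    rw [if_pos rfl] at h
    rw [← h]
    exact Finset.sum_congr rfl fun n _ => pow_two _
  -- an orthonormal basis of W
  let w : OrthonormalBasis (Fin R) ℝ W :=
    (stdOrthonormalBasis ℝ W).reindex (finCongr hW)
  have hwcoe : Orthonormal ℝ (fun j : Fin R => ((w j : W) : H)) := by
    rw [orthonormal_iff_ite]
    intro i j
    rw [← Submodule.coe_inner]
    exact orthonormal_iff_ite.mp w.orthonormal i j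
  -- norm of projection via the basis
  have hproj : ∀ n, ‖(W.orthogonalProjectionOnto (u n) : H)‖ ^ 2
      = ∑ j, ⟪u n, ((w j : W) : H)⟫ ^ 2 := by
    intro n
    set y : W := W.orthogonalProjectionOnto (u n) with hy
    have h1 : ‖(y : H)‖ ^ 2 = ∑ j, ⟪((w j : W) : H), (y : H)⟫ ^ 2 := by
      have hy2 : (y : H) = ∑ j, ⟪((w j : W) : H), (y : H)⟫ • ((w j : W) : H) := by
        have := w.sum_repr' y
        calc (y : H) = ((∑ j, ⟪w j, y⟫ • w j : W) : H) := by rw [this]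
          _ = ∑ j, ⟪((w j : W) : H), (y : H)⟫ • ((w j : W) : H) := by
              push_cast [Submodule.coe_inner]
              rfl
      conv_lhs => rw [hy2]
      exact pod_norm_sum hwcoe _ _
    rw [h1]
    refine Finset.sum_congr rfl fun j _ => ?_
    have h0 : ⟪u n - (y : H), ((w j : W) : H)⟫ = 0 :=
      W.starProjection_inner_eq_zero (u n) _ (w j).2
    rw [inner_sub_left, sub_eq_zero] at h0
    rw [real_inner_comm, ← h0]
  -- Pythagoras
  have hpyth : ∀ n, ‖u n - (W.orthogonalProjectionOnto (u n) : H)‖ ^ 2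
      = ‖u n‖ ^ 2 - ‖(W.orthogonalProjectionOnto (u n) : H)‖ ^ 2 := by
    intro n
    have h0 : ⟪u n - (W.orthogonalProjectionOnto (u n) : H),
        (W.orthogonalProjectionOnto (u n) : H)⟫ = 0 :=
      W.starProjection_inner_eq_zero (u n) _ (W.orthogonalProjectionOnto (u n)).2
    have h1 : ‖u n‖ ^ 2 = ‖u n - (W.orthogonalProjectionOnto (u n) : H)‖ ^ 2
        + ‖(W.orthogonalProjectionOnto (u n) : H)‖ ^ 2 := by
      calc ‖u n‖ ^ 2
          = ‖(u n - (W.orthogonalProjectionOnto (u n) : H))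
              + (W.orthogonalProjectionOnto (u n) : H)‖ ^ 2 := by rw [sub_add_cancel]
        _ = _ := by rw [norm_add_sq_real, h0]; ring
    linarith
  -- the coefficients b
  set b : Fin K → ℝ := fun i => ∑ j, ⟪φ i, ((w j : W) : H)⟫ ^ 2 with hb
  have hb0 : ∀ i, 0 ≤ b i := fun i => Finset.sum_nonneg fun j _ => sq_nonneg _
  have hb1 : ∀ i, b i ≤ 1 := by
    intro i
    have hbessel := hwcoe.sum_inner_products_le (φ i) (s := Finset.univ)
    have hφ : ‖φ i‖ = 1 := horth.1 i
    calc b i = ∑ j, ‖⟪((w j : W) : H), φ i⟫‖ ^ 2 := by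
          refine Finset.sum_congr rfl fun j _ => ?_
          rw [Real.norm_eq_abs, sq_abs, real_inner_comm]
      _ ≤ ‖φ i‖ ^ 2 := hbessel
      _ = 1 := by rw [hφ]; norm_num
  have hbsum : ∑ i, b i ≤ (R : ℝ) := by
    have : ∀ j : Fin R, ∑ i, ⟪φ i, ((w j : W) : H)⟫ ^ 2 ≤ 1 := by
      intro j
      have hbessel := horth.sum_inner_products_le (((w j : W)) : H) (s := Finset.univ)
      have hwj : ‖((w j : W) : H)‖ = 1 := hwcoe.1 j
      calc ∑ i, ⟪φ i, ((w j : W) : H)⟫ ^ 2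
          = ∑ i, ‖⟪φ i, ((w j : W) : H)⟫‖ ^ 2 := by
            refine Finset.sum_congr rfl fun i _ => ?_
            rw [Real.norm_eq_abs, sq_abs]
        _ ≤ ‖((w j : W) : H)‖ ^ 2 := hbessel
        _ = 1 := by rw [hwj]; norm_num
    calc ∑ i, b i = ∑ j : Fin R, ∑ i, ⟪φ i, ((w j : W) : H)⟫ ^ 2 := Finset.sum_comm
      _ ≤ ∑ _j : Fin R, (1 : ℝ) := Finset.sum_le_sum fun j _ => this j
      _ = (R : ℝ) := by simp
  -- total projected energy
  have henergy : ∑ n, ‖(W.orthogonalProjectionOnto (u n) : H)‖ ^ 2 = ∑ i, lam i * b i := by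
    calc ∑ n, ‖(W.orthogonalProjectionOnto (u n) : H)‖ ^ 2
        = ∑ n, ∑ j, ⟪u n, ((w j : W) : H)⟫ ^ 2 :=
          Finset.sum_congr rfl fun n _ => hproj n
      _ = ∑ j, ∑ n, ⟪u n, ((w j : W) : H)⟫ ^ 2 := Finset.sum_comm
      _ = ∑ j, ∑ i, lam i * ⟪φ i, ((w j : W) : H)⟫ ^ 2 :=
          Finset.sum_congr rfl fun j _ => hquad _
      _ = ∑ i, lam i * b i := by
          rw [Finset.sum_comm]
          exact Finset.sum_congr rfl fun i _ => by rw [hb, Finset.mul_sum]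
  -- the key inequality Σ lam b ≤ Σ_{i ∈ F} lam
  have hkey : ∑ i, lam i * b i ≤ ∑ i ∈ F, lam i := by
    rcases lt_or_ge R K with hRK | hRK
    · -- t = lam ⟨R, hRK⟩
      refine pod_major lam b (lam ⟨R, hRK⟩) ?_ ?_ (hlam0 _) hb0 hb1 ?_
      · intro i hi
        exact hdecr i ⟨R, hRK⟩ (by simpa [Fin.le_def] using le_of_lt hi)
      · intro i hi
        exact hdecr ⟨R, hRK⟩ i (by simpa [Fin.le_def] using le_of_not_gt hi)
      · have hcard : (Finset.univ.filter fun i : Fin K => (i : ℕ) < R).card = R := by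
          have : (Finset.univ.filter fun i : Fin K => (i : ℕ) < R)
              = Finset.Iio (⟨R, hRK⟩ : Fin K) := by
            ext i; simp [Fin.lt_def]
          rw [this, Fin.card_Iio]
        rw [hcard]
        exact mul_le_mul_of_nonneg_left hbsum (hlam0 _)
    · -- t = 0
      refine pod_major lam b 0 (fun i _ => hlam0 i) ?_ le_rfl hb0 hb1 (by simp)
      intro i hi
      exact absurd (lt_of_lt_of_le i.2 hRK) hi
  -- put everything together
  have hL : ∑ n, ‖u n - (W.orthogonalProjectionOnto (u n) : H)‖ ^ 2
      = ∑ n, ‖u n‖ ^ 2 - ∑ i, lam i * b i := by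
    rw [← henergy, ← Finset.sum_sub_distrib]
    exact Finset.sum_congr rfl fun n _ => hpyth n
  have htot : ∑ n, ‖u n‖ ^ 2 = ∑ i ∈ F, lam i + ∑ i ∈ Fᶜ, lam i := by
    calc ∑ n, ‖u n‖ ^ 2 = ∑ n, ∑ i, ⟪u n, φ i⟫ ^ 2 :=
          Finset.sum_congr rfl fun n _ => hpars n
      _ = ∑ i : Fin K, lam i := by
          rw [Finset.sum_comm]
          refine Finset.sum_congr rfl fun i _ => ?_
          have h := gram i i
          rw [if_pos rfl] at h
          rw [← h]
          exact Finset.sum_congr rfl fun n _ => pow_two _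
      _ = ∑ i ∈ F, lam i + ∑ i ∈ Fᶜ, lam i :=
          (Finset.sum_add_sum_compl F lam).symm
  rw [ge_iff_le, hrhs, hL, htot]
  linarith [hkey]
end

section
/- Energy equality for the AC-ROM scheme: If (u^{n+1}, p^{n+1}) in finite-dimensional spaces X_R × Q_M satisfy, for all φ ∈ X_R and ψ ∈ Q_M, ((u^{n+1}−u^n)/Δt, φ) + b*(u^n, u^{n+1}, φ) + ν(∇u^{n+1}, ∇φ) − (p^{n+1}, ∇·φ) = (f^{n+1}, φ) and ε((p^{n+1}−p^n)/Δt, ψ) + (∇·u^{n+1}, ψ) = 0, then ‖u^{N+1}‖² + ε‖p^{N+1}‖² + Σ_{n=0}^N (‖u^{n+1}−u^n‖² + ε‖p^{n+1}−p^n‖²) + 2Δt ν Σ_{n=0}^N ‖∇u^{n+1}‖² = ‖u^0‖² + ε‖p^0‖² + 2Δt Σ_{n=0}^N (f^{n+1}, u^{n+1}). -/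
/-! Testing the momentum equation with `u^{n+1}` kills the convective term by skew-symmetry,
and testing the continuity equation with `p^{n+1}` produces the coupling term
`(∇·u^{n+1}, p^{n+1})` with the opposite sign, so adding the two cancels the pressure.
The polarization identity turns the two time differences into differences of squared norms
plus numerical dissipation, and summing the resulting one-step equality telescopes. -/

open RealInnerProductSpace Finset

theorem two_mul_inner_sub_self_eq {E : Type*} [NormedAddCommGroup E] [InnerProductSpace ℝ E]
    (a b : E) : 2 * ⟪a - b, a⟫ = ‖a‖ ^ 2 - ‖b‖ ^ 2 + ‖a - b‖ ^ 2 := by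
  rw [inner_sub_left, real_inner_self_eq_norm_sq, norm_sub_sq_real, real_inner_comm]
  ring

theorem add_sum_range_eq_of_step {M : Type*} [AddCommGroup M] {E D F : ℕ → M}
    (step : ∀ n, E (n + 1) + D n = E n + F n) (N : ℕ) :
    E N + ∑ n ∈ range N, D n = E 0 + ∑ n ∈ range N, F n := by
  have h : ∀ n, E (n + 1) - E n = F n - D n := fun n ↦ by
    rw [sub_eq_sub_iff_add_eq_add, step, add_comm]
  have telescope := sum_range_sub E N
  rw [sum_congr rfl fun n _ ↦ h n, sum_sub_distrib, sub_eq_iff_eq_add'] at telescope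
  rw [telescope]
  abel

theorem ac_rom_energy_step {X Y Q : Type*} [NormedAddCommGroup X] [InnerProductSpace ℝ X]
    [NormedAddCommGroup Y] [InnerProductSpace ℝ Y]
    [NormedAddCommGroup Q] [InnerProductSpace ℝ Q]
    (grad : X → Y) (dvg : X → Q) {ν ε Δt : ℝ} (hΔt : Δt ≠ 0)
    {u₀ u₁ f : X} {p₀ p₁ : Q}
    (hmomentum : ⟪u₁ - u₀, u₁⟫ / Δt + ν * ⟪grad u₁, grad u₁⟫ - ⟪p₁, dvg u₁⟫ = ⟪f, u₁⟫)
    (hcontinuity : ε * (⟪p₁ - p₀, p₁⟫ / Δt) + ⟪dvg u₁, p₁⟫ = 0) :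
    ‖u₁‖ ^ 2 + ε * ‖p₁‖ ^ 2 + ((‖u₁ - u₀‖ ^ 2 + ε * ‖p₁ - p₀‖ ^ 2)
        + 2 * Δt * ν * ‖grad u₁‖ ^ 2)
      = ‖u₀‖ ^ 2 + ε * ‖p₀‖ ^ 2 + 2 * Δt * ⟪f, u₁⟫ := by
  rw [real_inner_self_eq_norm_sq, real_inner_comm (dvg u₁) p₁] at hmomentum
  field_simp at hmomentum hcontinuity
  linear_combination 2 * hmomentum + 2 * hcontinuity - two_mul_inner_sub_self_eq u₁ u₀
    - ε * two_mul_inner_sub_self_eq p₁ p₀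

theorem ac_rom_energy_equality_general
    {X Y Q : Type*} [NormedAddCommGroup X] [InnerProductSpace ℝ X]
    [NormedAddCommGroup Y] [InnerProductSpace ℝ Y]
    [NormedAddCommGroup Q] [InnerProductSpace ℝ Q]
    (grad : X →ₗ[ℝ] Y) (dvg : X →ₗ[ℝ] Q)
    (bstar : X → X → X → ℝ) (hskew : ∀ w v, bstar w v v = 0)
    (XR : Submodule ℝ X) (QM : Submodule ℝ Q)
    (ν ε Δt : ℝ) (hΔt : 0 < Δt)
    (f u : ℕ → X) (p : ℕ → Q)
    (hu : ∀ n, u n ∈ XR) (hp : ∀ n, p n ∈ QM)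
    (hscheme1 : ∀ n, ∀ φ ∈ XR,
      ⟪u (n + 1) - u n, φ⟫ / Δt + bstar (u n) (u (n + 1)) φ
          + ν * ⟪grad (u (n + 1)), grad φ⟫ - ⟪p (n + 1), dvg φ⟫
        = ⟪f (n + 1), φ⟫)
    (hscheme2 : ∀ n, ∀ ψ ∈ QM,
      ε * (⟪p (n + 1) - p n, ψ⟫ / Δt) + ⟪dvg (u (n + 1)), ψ⟫ = 0)
    (N : ℕ) :
    ‖u (N + 1)‖ ^ 2 + ε * ‖p (N + 1)‖ ^ 2
        + ∑ n ∈ Finset.range (N + 1),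
            (‖u (n + 1) - u n‖ ^ 2 + ε * ‖p (n + 1) - p n‖ ^ 2)
        + 2 * Δt * ν * ∑ n ∈ Finset.range (N + 1), ‖grad (u (n + 1))‖ ^ 2
      = ‖u 0‖ ^ 2 + ε * ‖p 0‖ ^ 2
        + 2 * Δt * ∑ n ∈ Finset.range (N + 1), ⟪f (n + 1), u (n + 1)⟫ := by
  have energy := add_sum_range_eq_of_step
    (E := fun n ↦ ‖u n‖ ^ 2 + ε * ‖p n‖ ^ 2)
    (D := fun n ↦ (‖u (n + 1) - u n‖ ^ 2 + ε * ‖p (n + 1) - p n‖ ^ 2)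
      + 2 * Δt * ν * ‖grad (u (n + 1))‖ ^ 2)
    (F := fun n ↦ 2 * Δt * ⟪f (n + 1), u (n + 1)⟫)
    (fun n ↦ ac_rom_energy_step grad dvg hΔt.ne'
      (by simpa only [hskew, add_zero] using hscheme1 n _ (hu (n + 1)))
      (hscheme2 n _ (hp (n + 1))))
    (N + 1)
  rw [sum_add_distrib, ← mul_sum, ← mul_sum] at energy
  linear_combination energy

/-- Energy equality for the AC-ROM scheme. `X` abstracts the velocity space with
`L²` inner product, `grad` and `dvg` the gradient and divergence operators, `Q`
the pressure `L²` space, and `bstar` the skew-symmetric trilinear form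
(`bstar w v v = 0`). If `(u^{n+1}, p^{n+1}) ∈ X_R × Q_M` satisfy the AC-ROM
scheme for all test functions in `X_R × Q_M`, then the discrete energy equality
holds. -/
theorem ac_rom_energy_equality
    {X Y Q : Type*} [NormedAddCommGroup X] [InnerProductSpace ℝ X]
    [NormedAddCommGroup Y] [InnerProductSpace ℝ Y]
    [NormedAddCommGroup Q] [InnerProductSpace ℝ Q]
    (grad : X →ₗ[ℝ] Y) (dvg : X →ₗ[ℝ] Q)
    (bstar : X → X → X → ℝ) (hskew : ∀ w v, bstar w v v = 0)
    (XR : Submodule ℝ X) (QM : Submodule ℝ Q)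
    (ν ε Δt : ℝ) (hν : 0 < ν) (hε : 0 < ε) (hΔt : 0 < Δt)
    (f u : ℕ → X) (p : ℕ → Q)
    (hu : ∀ n, u n ∈ XR) (hp : ∀ n, p n ∈ QM)
    (hscheme1 : ∀ n, ∀ φ ∈ XR,
      ⟪u (n + 1) - u n, φ⟫ / Δt + bstar (u n) (u (n + 1)) φ
          + ν * ⟪grad (u (n + 1)), grad φ⟫ - ⟪p (n + 1), dvg φ⟫
        = ⟪f (n + 1), φ⟫)
    (hscheme2 : ∀ n, ∀ ψ ∈ QM,
      ε * (⟪p (n + 1) - p n, ψ⟫ / Δt) + ⟪dvg (u (n + 1)), ψ⟫ = 0)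
    (N : ℕ) :
    ‖u (N + 1)‖ ^ 2 + ε * ‖p (N + 1)‖ ^ 2
        + ∑ n ∈ Finset.range (N + 1),
            (‖u (n + 1) - u n‖ ^ 2 + ε * ‖p (n + 1) - p n‖ ^ 2)
        + 2 * Δt * ν * ∑ n ∈ Finset.range (N + 1), ‖grad (u (n + 1))‖ ^ 2
      = ‖u 0‖ ^ 2 + ε * ‖p 0‖ ^ 2
        + 2 * Δt * ∑ n ∈ Finset.range (N + 1), ⟪f (n + 1), u (n + 1)⟫ :=
  ac_rom_energy_equality_general grad dvg bstar hskew XR QM ν ε Δt hΔt f u p hu hp hscheme1 hscheme2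
    N
end

section
/- Unconditional stability of the AC-ROM scheme: Under the same scheme as in the energy equality, for any N and without any restriction on Δt, ‖u^{N+1}‖² + ε‖p^{N+1}‖² + Σ_{n=0}^N(‖u^{n+1}−u^n‖² + ε‖p^{n+1}−p^n‖²) + Δt ν Σ_{n=0}^N ‖∇u^{n+1}‖² ≤ ‖u^0‖² + ε‖p^0‖² + (4Δt/ν) Σ_{n=0}^N ‖f^{n+1}‖_{−1}². -/
open RealInnerProductSpace

lemma two_inner_sub_self {X : Type*} [NormedAddCommGroup X] [InnerProductSpace ℝ X]
    (a b : X) : 2 * ⟪a - b, a⟫ = ‖a‖ ^ 2 - ‖b‖ ^ 2 + ‖a - b‖ ^ 2 := by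
  have h1 : ‖a - b‖ ^ 2 = ‖a‖ ^ 2 - 2 * ⟪a, b⟫ + ‖b‖ ^ 2 := norm_sub_sq_real a b
  have h2 : ⟪a - b, a⟫ = ‖a‖ ^ 2 - ⟪a, b⟫ := by
    rw [inner_sub_left, real_inner_self_eq_norm_sq, real_inner_comm b a]
  linarith

/-- Unconditional stability of the AC-ROM scheme: with no restriction on `Δt`,
the discrete solution satisfies the energy inequality with the dual-norm bound
on the forcing, where `fneg n` bounds the `H⁻¹` norm of `f n`, i.e.
`(f n, v) ≤ fneg n * ‖∇v‖` for all `v`. -/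
theorem ac_rom_unconditional_stability
    {X Y Q : Type*} [NormedAddCommGroup X] [InnerProductSpace ℝ X]
    [NormedAddCommGroup Y] [InnerProductSpace ℝ Y]
    [NormedAddCommGroup Q] [InnerProductSpace ℝ Q]
    (grad : X →ₗ[ℝ] Y) (dvg : X →ₗ[ℝ] Q)
    (bstar : X → X → X → ℝ) (hskew : ∀ w v, bstar w v v = 0)
    (XR : Submodule ℝ X) (QM : Submodule ℝ Q)
    (ν ε Δt : ℝ) (hν : 0 < ν) (hε : 0 < ε) (hΔt : 0 < Δt)
    (f u : ℕ → X) (p : ℕ → Q)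
    (hu : ∀ n, u n ∈ XR) (hp : ∀ n, p n ∈ QM)
    (fneg : ℕ → ℝ) (hfneg : ∀ n, 0 ≤ fneg n)
    (hdual : ∀ n, ∀ v : X, ⟪f n, v⟫ ≤ fneg n * ‖grad v‖)
    (hscheme1 : ∀ n, ∀ φ ∈ XR,
      ⟪u (n + 1) - u n, φ⟫ / Δt + bstar (u n) (u (n + 1)) φ
          + ν * ⟪grad (u (n + 1)), grad φ⟫ - ⟪p (n + 1), dvg φ⟫
        = ⟪f (n + 1), φ⟫)
    (hscheme2 : ∀ n, ∀ ψ ∈ QM,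
      ε * (⟪p (n + 1) - p n, ψ⟫ / Δt) + ⟪dvg (u (n + 1)), ψ⟫ = 0)
    (N : ℕ) :
    ‖u (N + 1)‖ ^ 2 + ε * ‖p (N + 1)‖ ^ 2
        + ∑ n ∈ Finset.range (N + 1),
            (‖u (n + 1) - u n‖ ^ 2 + ε * ‖p (n + 1) - p n‖ ^ 2)
        + Δt * ν * ∑ n ∈ Finset.range (N + 1), ‖grad (u (n + 1))‖ ^ 2
      ≤ ‖u 0‖ ^ 2 + ε * ‖p 0‖ ^ 2
        + (4 * Δt / ν) * ∑ n ∈ Finset.range (N + 1), (fneg (n + 1)) ^ 2 := by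
  have key : ∀ n : ℕ,
      ‖u (n + 1)‖ ^ 2 + ε * ‖p (n + 1)‖ ^ 2
        + (‖u (n + 1) - u n‖ ^ 2 + ε * ‖p (n + 1) - p n‖ ^ 2)
        + Δt * ν * ‖grad (u (n + 1))‖ ^ 2
      ≤ ‖u n‖ ^ 2 + ε * ‖p n‖ ^ 2 + (4 * Δt / ν) * (fneg (n + 1)) ^ 2 := by
    intro n
    have h1 := hscheme1 n (u (n + 1)) (hu (n + 1))
    have h2 := hscheme2 n (p (n + 1)) (hp (n + 1))
    rw [hskew] at h1
    have hcomm : ⟪dvg (u (n + 1)), p (n + 1)⟫ = ⟪p (n + 1), dvg (u (n + 1))⟫ :=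
      real_inner_comm _ _
    rw [hcomm] at h2
    have hgrad : ν * ⟪grad (u (n + 1)), grad (u (n + 1))⟫
        = ν * ‖grad (u (n + 1))‖ ^ 2 := by
      rw [real_inner_self_eq_norm_sq]
    have hA := two_inner_sub_self (u (n + 1)) (u n)
    have hB := two_inner_sub_self (p (n + 1)) (p n)
    have hF := hdual (n + 1) (u (n + 1))
    -- combine: from h1 and h2,
    -- A/Δt + ε B/Δt + ν G² = F  where A,B are the inner products
    have hcombined : ⟪u (n + 1) - u n, u (n + 1)⟫ / Δt
        + ε * (⟪p (n + 1) - p n, p (n + 1)⟫ / Δt)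
        + ν * ‖grad (u (n + 1))‖ ^ 2 = ⟪f (n + 1), u (n + 1)⟫ := by
      rw [← hgrad]; linarith
    have hmul : ⟪u (n + 1) - u n, u (n + 1)⟫
        + ε * ⟪p (n + 1) - p n, p (n + 1)⟫
        + Δt * (ν * ‖grad (u (n + 1))‖ ^ 2)
        = Δt * ⟪f (n + 1), u (n + 1)⟫ := by
      have := congrArg (fun x => Δt * x) hcombined
      field_simp at this
      linarith
    -- Young: 2 Δt F ≤ Δt ν G² + (Δt/ν) fneg²
    have hyoung : 2 * (Δt * ⟪f (n + 1), u (n + 1)⟫)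
        ≤ Δt * ν * ‖grad (u (n + 1))‖ ^ 2 + (Δt / ν) * (fneg (n + 1)) ^ 2 := by
      have hFG : ⟪f (n + 1), u (n + 1)⟫ ≤ fneg (n + 1) * ‖grad (u (n + 1))‖ := hF
      have hY : 2 * (fneg (n + 1) * ‖grad (u (n + 1))‖)
          ≤ ν * ‖grad (u (n + 1))‖ ^ 2 + (1 / ν) * (fneg (n + 1)) ^ 2 := by
        rw [← mul_le_mul_iff_right₀ hν]
        have hνν : ν * (1 / ν) = 1 := mul_one_div_cancel hν.ne'
        nlinarith [sq_nonneg (ν * ‖grad (u (n + 1))‖ - fneg (n + 1))]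
      have h3 := mul_le_mul_of_nonneg_left hFG hΔt.le
      have h4 := mul_le_mul_of_nonneg_left hY hΔt.le
      have hd : Δt * (1 / ν) = Δt / ν := mul_one_div Δt ν
      nlinarith [h3, h4, hd]
    have hfn2 : 0 ≤ (fneg (n + 1)) ^ 2 := sq_nonneg _
    have hcoef : (Δt / ν) * (fneg (n + 1)) ^ 2 ≤ (4 * Δt / ν) * (fneg (n + 1)) ^ 2 := by
      apply mul_le_mul_of_nonneg_right _ hfn2
      gcongr
      linarith
    have hBe := congrArg (fun x => ε * x) hB
    replace hBe : ε * (2 * ⟪p (n + 1) - p n, p (n + 1)⟫)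
        = ε * (‖p (n + 1)‖ ^ 2 - ‖p n‖ ^ 2 + ‖p (n + 1) - p n‖ ^ 2) := hBe
    linarith [hA, hBe, hmul, hyoung, hcoef]
  induction N with
  | zero =>
      norm_num [Finset.sum_range_one]
      have := key 0
      linarith
  | succ N ih =>
      rw [Finset.sum_range_succ
            (fun n => ‖u (n + 1) - u n‖ ^ 2 + ε * ‖p (n + 1) - p n‖ ^ 2) (N + 1),
          Finset.sum_range_succ (fun n => ‖grad (u (n + 1))‖ ^ 2) (N + 1),
          Finset.sum_range_succ (fun n => (fneg (n + 1)) ^ 2) (N + 1),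
          mul_add, mul_add]
      have := key (N + 1)
      linarith
end
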